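/- arXiv:1004.0888 — 2 statements merged into one kernel-verified Lean document; each statement's English description precedes it below -/
import Mathlib

section
/- Let d ≥ 2 and let W₁, …, W_{d²−1} ∈ Matrix (Fin d) (Fin d) ℂ be unitary matrices with Tr(Wⱼ) = 0 for all j and Tr(Wⱼᴴ W_k) = 0 for all j ≠ k (so that {1/√d, Wⱼ/√d} is an orthonormal basis of the d×d matrices). Then for every matrix ρ ∈ Matrix (Fin d) (Fin d) ℂ: ρ + ∑_{j=1}^{d²−1} Wⱼ ρ Wⱼᴴ = d · Tr(ρ) · 1. -/
/-! Together with `1`, the `Wⱼ` form a family of `d²` pairwise orthogonal matrices of squared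
norm `d`, i.e. an orthogonal basis of the `d × d` matrices.
Its completeness relation `∑ₐ conj (Bₐ p q) Bₐ r s = d δ_{pr} δ_{qs}` turns
`∑ₐ Bₐ ρ Bₐᴴ` into `d Tr(ρ) 1`. -/

open Matrix Kronecker BigOperators ComplexOrder

noncomputable def traceNorm {n : Type*} [Fintype n] [DecidableEq n] (A : Matrix n n ℂ) : ℝ :=
  (((Matrix.posSemidef_conjTranspose_mul_self A).1.eigenvectorUnitary.1 *
    Matrix.diagonal (((↑) : ℝ → ℂ) ∘ Real.sqrt ∘ (Matrix.posSemidef_conjTranspose_mul_self A).1.eigenvalues) *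
    (star (Matrix.posSemidef_conjTranspose_mul_self A).1.eigenvectorUnitary : Matrix n n ℂ)).trace).re

def IsDensity {n : Type*} [Fintype n] (ρ : Matrix n n ℂ) : Prop :=
  ρ.PosSemidef ∧ ρ.trace = 1

def tensorId {X Y Z : Type*} (Φ : Matrix X X ℂ → Matrix Y Y ℂ)
    (ρ : Matrix (X × Z) (X × Z) ℂ) : Matrix (Y × Z) (Y × Z) ℂ :=
  Matrix.of fun p q => Φ (Matrix.of fun x x' => ρ (x, p.2) (x', q.2)) p.1 q.1

noncomputable def ChoiMatrix {X Y : Type*} [Fintype X] [DecidableEq X] [Fintype Y]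
    (Φ : Matrix X X ℂ → Matrix Y Y ℂ) : Matrix (Y × X) (Y × X) ℂ :=
  ∑ j : X, ∑ k : X, (Φ (Matrix.single j k 1)) ⊗ₖ (Matrix.single j k 1)

def IsChannel {X Y : Type*} [Fintype X] [DecidableEq X] [Fintype Y]
    (Φ : Matrix X X ℂ →ₗ[ℂ] Matrix Y Y ℂ) : Prop :=
  (∀ M, (Φ M).trace = M.trace) ∧ (ChoiMatrix (⇑Φ)).PosSemidef

def SeparableOp {Y Z : Type*} [Fintype Y] [Fintype Z]
    (P : Matrix (Y × Z) (Y × Z) ℂ) : Prop :=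
  ∃ (N : ℕ) (Q : Fin N → Matrix Y Y ℂ) (R : Fin N → Matrix Z Z ℂ),
    (∀ i, (Q i).PosSemidef) ∧ (∀ i, (R i).PosSemidef) ∧ P = ∑ i, Q i ⊗ₖ R i

def partialTranspose {Y Z : Type*} (M : Matrix (Y × Z) (Y × Z) ℂ) :
    Matrix (Y × Z) (Y × Z) ℂ :=
  Matrix.of fun p q => M (p.1, q.2) (q.1, p.2)

def IsPPT {Y Z : Type*} [Fintype Y] [Fintype Z] (M : Matrix (Y × Z) (Y × Z) ℂ) : Prop :=
  M.PosSemidef ∧ (partialTranspose M).PosSemidef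

namespace Matrix

variable {K m n ι : Type*} [Field K] [Fintype m] [DecidableEq m]
  [Fintype n] [DecidableEq n] [Fintype ι] [DecidableEq ι]

theorem mul_eq_smul_one_comm_of_equiv {A : Matrix m n K} {B : Matrix n m K} {c : K}
    (hc : c ≠ 0) (e : m ≃ n) (h : A * B = c • 1) : B * A = c • 1 := by
  have hinv : A * (c⁻¹ • B) = 1 := by
    rw [Matrix.mul_smul, h, smul_smul, inv_mul_cancel₀ hc, one_smul]
  rw [← one_smul K (B * A), ← mul_inv_cancel₀ hc, ← smul_smul, ← Matrix.smul_mul,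
    (mul_eq_one_comm_of_equiv e).mp hinv]

/-- The orthogonality of the `B a` says that the rows of the `card m² × card m²` matrix
`a, (p, q) ↦ B a p q` are orthogonal of equal length; hence so are its columns. -/
theorem sum_star_apply_mul_apply_of_orthogonal [StarRing K] {B : ι → Matrix m m K} {c : K}
    (hc : c ≠ 0) (hcard : Fintype.card ι = Fintype.card m ^ 2)
    (horth : ∀ a b, ((B a)ᴴ * B b).trace = if a = b then c else 0) (p q r s : m) :
    ∑ a, star (B a p q) * B a r s = if (p, q) = (r, s) then c else 0 := by
  let M : Matrix ι (m × m) K := of fun a pq => B a pq.1 pq.2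
  have hrows : M * Mᴴ = c • 1 := by
    ext a b
    calc (M * Mᴴ) a b = ((B b)ᴴ * B a).trace := by
          simp only [M, trace, diag, mul_apply, conjTranspose_apply, of_apply,
            Fintype.sum_prod_type]
          rw [Finset.sum_comm]
          simp only [mul_comm]
      _ = (c • (1 : Matrix ι ι K)) a b := by simp [horth, one_apply, eq_comm]
  let e : ι ≃ m × m := Fintype.equivOfCardEq (by rw [hcard, Fintype.card_prod, sq])
  have hcols := congrFun (congrFun (mul_eq_smul_one_comm_of_equiv hc e hrows) (p, q)) (r, s)
  simpa [M, mul_apply, one_apply, Prod.ext_iff] using hcols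

theorem sum_mul_mul_conjTranspose_eq_trace_smul_one [StarRing K] {B : ι → Matrix m m K} {c : K}
    (hc : c ≠ 0) (hcard : Fintype.card ι = Fintype.card m ^ 2)
    (horth : ∀ a b, ((B a)ᴴ * B b).trace = if a = b then c else 0) (X : Matrix m m K) :
    ∑ a, B a * X * (B a)ᴴ = (c * X.trace) • 1 := by
  ext p q
  have hcomplete := sum_star_apply_mul_apply_of_orthogonal hc hcard horth
  calc (∑ a, B a * X * (B a)ᴴ) p q
      = ∑ s, ∑ r, X r s * ∑ a, star (B a q s) * B a p r := by
        simp only [sum_apply, mul_apply, conjTranspose_apply, Finset.mul_sum, Finset.sum_mul]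
        rw [Finset.sum_comm]
        refine Finset.sum_congr rfl fun s _ => ?_
        rw [Finset.sum_comm]
        exact Finset.sum_congr rfl fun r _ => Finset.sum_congr rfl fun a _ => by ring
    _ = ((c * X.trace) • (1 : Matrix m m K)) p q := by
        simp only [hcomplete, Prod.mk.injEq, smul_apply, one_apply, smul_eq_mul]
        by_cases hpq : q = p
        · simp [hpq, trace, Finset.mul_sum, mul_comm]
        · simp [hpq, Ne.symm hpq]

end Matrix

/-- for an orthonormal family of `d² - 1` traceless unitaries `Wⱼ`,
`ρ + ∑ⱼ Wⱼ ρ Wⱼᴴ = d · Tr(ρ) · 1`. -/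
theorem sum_unitary_conj_eq_trace_smul_one
    (d : ℕ) (hd : 2 ≤ d) (W : Fin (d ^ 2 - 1) → Matrix (Fin d) (Fin d) ℂ)
    (hWunit : ∀ j, (W j)ᴴ * W j = 1)
    (hWtr : ∀ j, (W j).trace = 0)
    (hWorth : ∀ j k, j ≠ k → ((W j)ᴴ * W k).trace = 0)
    (ρ : Matrix (Fin d) (Fin d) ℂ) :
    ρ + ∑ j, W j * ρ * (W j)ᴴ = ((d : ℂ) * ρ.trace) • (1 : Matrix (Fin d) (Fin d) ℂ) := by
  let B : Option (Fin (d ^ 2 - 1)) → Matrix (Fin d) (Fin d) ℂ := fun a => a.elim 1 W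
  have hcard : Fintype.card (Option (Fin (d ^ 2 - 1))) = Fintype.card (Fin d) ^ 2 := by
    simp only [Fintype.card_option, Fintype.card_fin]
    exact Nat.sub_add_cancel (Nat.one_le_pow _ _ (by omega))
  have horth : ∀ a b, ((B a)ᴴ * B b).trace = if a = b then (d : ℂ) else 0 := by
    rintro (_ | j) (_ | k)
    · simp [B]
    · simp [B, hWtr k]
    · simp [B, trace_conjTranspose, hWtr j]
    · by_cases hjk : j = k
      · subst hjk
        simp [B, hWunit j]
      · simp [B, hjk, hWorth j k hjk]
  have hd0 : (d : ℂ) ≠ 0 := by exact_mod_cast (show d ≠ 0 by omega)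
  simpa [B, Fintype.sum_option] using sum_mul_mul_conjTranspose_eq_trace_smul_one hd0 hcard horth ρ
end

section
/- Let d ≥ 2 and define the Werner–Holevo channels Φ₀, Φ₁ on Matrix (Fin d) (Fin d) ℂ by Φ₀(X) = (Tr(X)·1 + Xᵀ)/(d+1) and Φ₁(X) = (Tr(X)·1 − Xᵀ)/(d−1). Then for every density operator ρ on Fin d one has ‖Φ₀(ρ) − Φ₁(ρ)‖₁ ≤ 4/(d+1), and for every unit vector ψ ∈ ℂ^d one has ‖Φ₀(ψψᴴ) − Φ₁(ψψᴴ)‖₁ = 4/(d+1). (Consequently ‖Φ₀ − Φ₁‖_NE = 4/(d+1).) -/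
open Matrix Kronecker BigOperators ComplexOrder

/-! Since `Tr ρ = 1`, the difference `Φ₀(ρ) - Φ₁(ρ) = 2/(d²-1) • (d • ρᵀ - 1)` is a real affine
function of the Hermitian matrix `ρᵀ`, so its trace norm is `2/(d²-1) * ∑ |d μᵢ - 1|` over the
eigenvalues `μᵢ` of `ρᵀ`, which are nonnegative and sum to `1`. For `0 ≤ μ ≤ 1` one has
`|d μ - 1| ≤ (d - 2) μ + 1`, with equality when `μ ∈ {0, 1}`; summing gives `2d - 2`, i.e. the
bound `4/(d+1)`, attained when all eigenvalues are `0` or `1`, as for a pure state. -/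

open scoped MatrixOrder

lemma traceNorm_eq_re_trace_abs {n : Type*} [Fintype n] [DecidableEq n] (A : Matrix n n ℂ) :
    traceNorm A = (CFC.abs A).trace.re := by
  have hA := posSemidef_conjTranspose_mul_self A
  rw [CFC.abs, star_eq_conjTranspose, CFC.sqrt_eq_real_sqrt _ hA.nonneg, cfcₙ_eq_cfc,
    hA.1.cfc_eq, IsHermitian.cfc, Unitary.conjStarAlgAut_apply]
  rfl

namespace Matrix.IsHermitian

variable {n : Type*} [Fintype n] [DecidableEq n] {A : Matrix n n ℂ}

lemma trace_cfc (hA : A.IsHermitian) (f : ℝ → ℝ) :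
    (cfc f A).trace = ∑ i, (f (hA.eigenvalues i) : ℂ) := by
  rw [hA.cfc_eq, IsHermitian.cfc, Unitary.conjStarAlgAut_apply, trace_mul_cycle,
    Unitary.coe_star_mul_self, Matrix.one_mul, trace_diagonal]
  rfl

lemma traceNorm_cfc (hA : A.IsHermitian) (f : ℝ → ℝ) :
    traceNorm (cfc f A) = ∑ i, |f (hA.eigenvalues i)| := by
  rw [traceNorm_eq_re_trace_abs, CFC.abs_eq_cfc_norm _ (cfc_predicate f A),
    ← cfc_comp' (‖·‖) f A (hf := A.finite_real_spectrum.continuousOn f), hA.trace_cfc]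
  simp

lemma traceNorm_smul_add_smul_one (hA : A.IsHermitian) (a b : ℝ) :
    traceNorm ((a : ℂ) • A + (b : ℂ) • 1) = ∑ i, |a * hA.eigenvalues i + b| := by
  have hA' : IsSelfAdjoint A := hA
  have hcfc : cfc (fun x => a * x + b) A = (a : ℂ) • A + (b : ℂ) • 1 := by
    rw [cfc_add .., cfc_const_mul .., cfc_id' ℝ A, cfc_const b A,
      Algebra.algebraMap_eq_smul_one]
    simp [Complex.coe_smul]
  rw [← hcfc, hA.traceNorm_cfc]

lemma eigenvalues_eq_zero_or_one (hA : A.IsHermitian) (hA₂ : IsIdempotentElem A) (i : n) :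
    hA.eigenvalues i = 0 ∨ hA.eigenvalues i = 1 :=
  hA₂.spectrum_subset ℝ (hA.eigenvalues_mem_spectrum_real i)

end Matrix.IsHermitian

lemma IsIdempotentElem.matrix_transpose {n R : Type*} [Fintype n] [CommSemiring R]
    {A : Matrix n n R} (hA : IsIdempotentElem A) : IsIdempotentElem Aᵀ := by
  rw [IsIdempotentElem, ← transpose_mul, hA.eq]

lemma isIdempotentElem_vecMulVec_self_star {n : Type*} [Fintype n] {ψ : n → ℂ}
    (hψ : star ψ ⬝ᵥ ψ = 1) : IsIdempotentElem (vecMulVec ψ (star ψ)) := by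
  rw [IsIdempotentElem, vecMulVec_mul_vecMulVec, hψ, one_smul]

lemma isDensity_vecMulVec_self_star {n : Type*} [Fintype n] {ψ : n → ℂ}
    (hψ : star ψ ⬝ᵥ ψ = 1) : IsDensity (vecMulVec ψ (star ψ)) :=
  ⟨posSemidef_vecMulVec_self_star ψ, by rw [trace_vecMulVec, dotProduct_comm, hψ]⟩

namespace IsDensity

variable {n : Type*} [Fintype n] {ρ : Matrix n n ℂ}

lemma transpose (hρ : IsDensity ρ) : IsDensity ρᵀ :=
  ⟨hρ.1.transpose, by rw [trace_transpose, hρ.2]⟩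

lemma sum_eigenvalues [DecidableEq n] (hρ : IsDensity ρ) : ∑ i, hρ.1.1.eigenvalues i = 1 := by
  have h : ∑ i, (hρ.1.1.eigenvalues i : ℂ) = 1 := hρ.1.1.trace_eq_sum_eigenvalues ▸ hρ.2
  exact_mod_cast h

end IsDensity

lemma abs_mul_sub_one_le {n μ : ℝ} (hn : 1 ≤ n) (hμ₀ : 0 ≤ μ) (hμ₁ : μ ≤ 1) :
    |n * μ - 1| ≤ (n - 2) * μ + 1 :=
  abs_le.mpr ⟨by nlinarith, by nlinarith⟩

lemma abs_mul_sub_one_of_eq_zero_or_one {n μ : ℝ} (hn : 1 ≤ n) (hμ : μ = 0 ∨ μ = 1) :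
    |n * μ - 1| = (n - 2) * μ + 1 := by
  rcases hμ with rfl | rfl
  · norm_num
  · rw [mul_one, abs_of_nonneg (by linarith)]
    ring

section SumEqOne

variable {ι : Type*} [Fintype ι] {μ : ι → ℝ}

lemma one_le_card_of_sum_eq_one (hμ : ∑ i, μ i = 1) : (1 : ℝ) ≤ Fintype.card ι := by
  obtain ⟨i, -, -⟩ := Finset.exists_ne_zero_of_sum_ne_zero (hμ ▸ one_ne_zero)
  exact_mod_cast Fintype.card_pos_iff.mpr ⟨i⟩

lemma sum_mul_add_one_of_sum_eq_one (hμ : ∑ i, μ i = 1) (c : ℝ) :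
    ∑ i, (c * μ i + 1) = c + Fintype.card ι := by
  simp [Finset.sum_add_distrib, ← Finset.mul_sum, hμ]

lemma sum_abs_card_mul_sub_one_le (hμ₀ : ∀ i, 0 ≤ μ i) (hμ : ∑ i, μ i = 1) :
    ∑ i, |(Fintype.card ι : ℝ) * μ i - 1| ≤ 2 * Fintype.card ι - 2 := by
  have hμ₁ (i : ι) : μ i ≤ 1 := hμ ▸ Finset.single_le_sum (fun j _ => hμ₀ j) (Finset.mem_univ i)
  calc ∑ i, |(Fintype.card ι : ℝ) * μ i - 1|
      ≤ ∑ i, ((Fintype.card ι - 2) * μ i + 1) := Finset.sum_le_sum fun i _ =>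
        abs_mul_sub_one_le (one_le_card_of_sum_eq_one hμ) (hμ₀ i) (hμ₁ i)
    _ = 2 * Fintype.card ι - 2 := by rw [sum_mul_add_one_of_sum_eq_one hμ]; ring

lemma sum_abs_card_mul_sub_one_of_eq_zero_or_one (hμ₀₁ : ∀ i, μ i = 0 ∨ μ i = 1)
    (hμ : ∑ i, μ i = 1) :
    ∑ i, |(Fintype.card ι : ℝ) * μ i - 1| = 2 * Fintype.card ι - 2 := by
  calc ∑ i, |(Fintype.card ι : ℝ) * μ i - 1|
      = ∑ i, ((Fintype.card ι - 2) * μ i + 1) := Finset.sum_congr rfl fun i _ =>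
        abs_mul_sub_one_of_eq_zero_or_one (one_le_card_of_sum_eq_one hμ) (hμ₀₁ i)
    _ = 2 * Fintype.card ι - 2 := by rw [sum_mul_add_one_of_sum_eq_one hμ]; ring

end SumEqOne

lemma wernerHolevo_sub_eq {n : Type*} [Fintype n] [DecidableEq n] {t : ℝ} (ht₁ : t + 1 ≠ 0)
    (ht₂ : t - 1 ≠ 0) {X : Matrix n n ℂ} (hX : X.trace = 1) :
    ((t : ℂ) + 1)⁻¹ • (X.trace • (1 : Matrix n n ℂ) + Xᵀ)
      - ((t : ℂ) - 1)⁻¹ • (X.trace • (1 : Matrix n n ℂ) - Xᵀ)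
      = ((2 / ((t + 1) * (t - 1)) * t : ℝ) : ℂ) • Xᵀ
        + ((-(2 / ((t + 1) * (t - 1))) : ℝ) : ℂ) • 1 := by
  have h₁ : (t : ℂ) + 1 ≠ 0 := by exact_mod_cast ht₁
  have h₂ : (t : ℂ) - 1 ≠ 0 := by exact_mod_cast ht₂
  rw [hX, one_smul]
  match_scalars <;> field_simp <;> ring

/-- for the Werner–Holevo channels, `‖Φ₀(ρ) - Φ₁(ρ)‖₁ ≤ 4/(d+1)` for every
density operator `ρ`, with equality on every pure state. -/
theorem werner_holevo_ne_norm
    (d : ℕ) (hd : 2 ≤ d)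
    (Φ₀ Φ₁ : Matrix (Fin d) (Fin d) ℂ → Matrix (Fin d) (Fin d) ℂ)
    (hΦ₀ : ∀ X, Φ₀ X = ((d : ℂ) + 1)⁻¹ • (X.trace • (1 : Matrix (Fin d) (Fin d) ℂ) + Xᵀ))
    (hΦ₁ : ∀ X, Φ₁ X = ((d : ℂ) - 1)⁻¹ • (X.trace • (1 : Matrix (Fin d) (Fin d) ℂ) - Xᵀ)) :
    (∀ ρ : Matrix (Fin d) (Fin d) ℂ, IsDensity ρ →
      traceNorm (Φ₀ ρ - Φ₁ ρ) ≤ 4 / ((d : ℝ) + 1)) ∧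
    (∀ ψ : Fin d → ℂ, star ψ ⬝ᵥ ψ = 1 →
      traceNorm (Φ₀ (Matrix.vecMulVec ψ (star ψ)) - Φ₁ (Matrix.vecMulVec ψ (star ψ)))
        = 4 / ((d : ℝ) + 1)) := by
  have hd' : (2 : ℝ) ≤ d := by exact_mod_cast hd
  have hd₁ : (d : ℝ) + 1 ≠ 0 := by positivity
  have hd₂ : (d : ℝ) - 1 ≠ 0 := by linarith
  set c : ℝ := 2 / (((d : ℝ) + 1) * ((d : ℝ) - 1)) with hc_def
  have hc : 0 ≤ c := div_nonneg zero_le_two (by nlinarith)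
  have hc_mul : c * (2 * d - 2) = 4 / ((d : ℝ) + 1) := by
    rw [hc_def]
    field_simp
    ring
  have hnorm (ρ : Matrix (Fin d) (Fin d) ℂ) (hρ : IsDensity ρ) :
      traceNorm (Φ₀ ρ - Φ₁ ρ) = c * ∑ i, |(d : ℝ) * hρ.transpose.1.1.eigenvalues i - 1| := by
    rw [hΦ₀, hΦ₁, ← Complex.ofReal_natCast, wernerHolevo_sub_eq hd₁ hd₂ hρ.2,
      hρ.transpose.1.1.traceNorm_smul_add_smul_one, Finset.mul_sum]
    refine Finset.sum_congr rfl fun i _ => ?_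
    rw [← abs_of_nonneg hc, ← abs_mul, hc_def]
    ring_nf
  constructor
  · intro ρ hρ
    rw [hnorm ρ hρ, ← hc_mul]
    gcongr
    simpa using sum_abs_card_mul_sub_one_le hρ.transpose.1.eigenvalues_nonneg
      hρ.transpose.sum_eigenvalues
  · intro ψ hψ
    have hP := isDensity_vecMulVec_self_star hψ
    rw [hnorm _ hP, ← hc_mul]
    congr 1
    simpa using sum_abs_card_mul_sub_one_of_eq_zero_or_one
      (hP.transpose.1.1.eigenvalues_eq_zero_or_one
        (isIdempotentElem_vecMulVec_self_star hψ).matrix_transpose)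
      hP.transpose.sum_eigenvalues
end
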